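/- Let M ∈ L(ℓ_2, ℓ_1) be given by (Mx)_k = x_k / k, and let U ∈ L(ℓ_1) be a d-diagonal operator (u_{nm} = 0 whenever |n − m| > d) with Im(UM) ⊆ Im(M). Then ‖M^{-1}UM‖_{L(ℓ_2)} ≤ √((2d+1)³) ‖U‖_{L(ℓ_1)}. -/

import Mathlib

open scoped ENNReal

noncomputable abbrev L1 := lp (fun _ : ℕ => ℝ) 1
noncomputable abbrev L2 := lp (fun _ : ℕ => ℝ) 2

/-- Evaluation at a coordinate as a continuous linear map on `ℓ¹`. -/
noncomputable def evalCLM (i : ℕ) : L1 →L[ℝ] ℝ :=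
  LinearMap.mkContinuous
    { toFun := fun f => f i
      map_add' := fun f g => by simp [lp.coeFn_add]
      map_smul' := fun c f => by simp [lp.coeFn_smul] }
    1 (fun f => by show ‖f i‖ ≤ 1 * ‖f‖; simpa using lp.norm_apply_le_norm one_ne_zero f i)

@[simp] lemma evalCLM_apply (i : ℕ) (f : L1) : evalCLM i f = f i := rfl

lemma hasSum_expansion (U : L1 →L[ℝ] L1) (y : L1) (n : ℕ) :
    HasSum (fun m => y m * (U (lp.single 1 m 1)) n) ((U y) n) := by
  have h1 : HasSum (fun m : ℕ => lp.single 1 m (y m)) y := lp.hasSum_single (by norm_num) y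
  have h2 := ((evalCLM n).comp U).hasSum h1
  have h3 : ∀ m : ℕ, ((evalCLM n).comp U) (lp.single 1 m (y m))
      = y m * (U (lp.single 1 m 1)) n := by
    intro m
    have hs : lp.single 1 m (y m) = y m • (lp.single 1 m (1:ℝ) : L1) := by
      rw [← lp.single_smul]; norm_num
    rw [ContinuousLinearMap.comp_apply, hs, map_smul]
    simp [lp.coeFn_smul]
  simpa only [ContinuousLinearMap.coe_comp', Function.comp_apply, h3, evalCLM_apply] using h2

lemma colsum (U : L1 →L[ℝ] L1) (m : ℕ) (s : Finset ℕ) :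
    ∑ n ∈ s, |(U (lp.single 1 m 1)) n| ≤ ‖U‖ := by
  have h := lp.sum_rpow_le_norm_rpow (p := 1) (E := fun _ : ℕ => ℝ) (by norm_num)
    (U (lp.single 1 m 1)) s
  simp only [ENNReal.toReal_one, Real.rpow_one, Real.norm_eq_abs] at h
  refine h.trans ?_
  calc ‖U (lp.single 1 m 1)‖ ≤ ‖U‖ * ‖(lp.single 1 m 1 : L1)‖ := U.le_opNorm _
    _ = ‖U‖ := by
        rw [show (1:ℝ) = (fun _ : ℕ => (1:ℝ)) m from rfl,
          lp.norm_single (E := fun _ : ℕ => ℝ) (by norm_num) m ((fun _ : ℕ => (1:ℝ)) m)]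
        simp

lemma entry_le (U : L1 →L[ℝ] L1) (n m : ℕ) : |(U (lp.single 1 m 1)) n| ≤ ‖U‖ := by
  simpa using colsum U m {n}

/-- Let `M : ℓ_2 → ℓ_1` be `(Mx)_k = x_k/(k+1)` (coordinates indexed from `0`).
If `U ∈ L(ℓ_1)` is a `d`-diagonal operator (matrix entries `u_{nm} = 0` whenever
`|n − m| > d`) with `Im(UM) ⊆ Im(M)`, then `{U}_M = M⁻¹UM` is a bounded operator on
`ℓ_2` with `‖M⁻¹UM‖ ≤ √((2d+1)³) ‖U‖`. -/
theorem conjugated_operator_bound_of_d_diagonal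
    (M : lp (fun _ : ℕ => ℝ) 2 →L[ℝ] lp (fun _ : ℕ => ℝ) 1)
    (hM : ∀ (x : lp (fun _ : ℕ => ℝ) 2) (k : ℕ), (M x) k = x k / (k + 1))
    (U : lp (fun _ : ℕ => ℝ) 1 →L[ℝ] lp (fun _ : ℕ => ℝ) 1)
    (d : ℕ)
    (hdiag : ∀ n m : ℕ, (d : ℤ) < |(n : ℤ) - (m : ℤ)| → (U (lp.single 1 m 1)) n = 0)
    (hIm : ∀ x : lp (fun _ : ℕ => ℝ) 2, ∃ y : lp (fun _ : ℕ => ℝ) 2,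
      U (M x) = M y) :
    ∃ V : lp (fun _ : ℕ => ℝ) 2 →L[ℝ] lp (fun _ : ℕ => ℝ) 2,
      (∀ x : lp (fun _ : ℕ => ℝ) 2, M (V x) = U (M x)) ∧
      ‖V‖ ≤ Real.sqrt ((2 * (d : ℝ) + 1) ^ 3) * ‖U‖ := by
  classical
  set u : ℕ → ℕ → ℝ := fun n m => (U (lp.single 1 m 1)) n with hu
  set S : ℕ → Finset ℕ := fun n => Finset.Icc (n - d) (n + d) with hS
  have hmemS : ∀ {n m : ℕ}, m ∈ S n ↔ (n - d ≤ m ∧ m ≤ n + d) := by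
    intro n m; simp [hS, Finset.mem_Icc]
  have hu0 : ∀ n m, m ∉ S n → u n m = 0 := by
    intro n m hm
    apply hdiag
    rw [lt_abs]
    have := hmemS.not.mp hm
    omega
  -- matrix expansion of U
  have key : ∀ (y : L1) (n : ℕ), (U y) n = ∑ m ∈ S n, u n m * y m := by
    intro y n
    have h1 := hasSum_expansion U y n
    have h2 : HasSum (fun m => y m * u n m) (∑ m ∈ S n, y m * u n m) := by
      apply hasSum_sum_of_ne_finset_zero
      intro m hm
      simp [hu0 n m hm]
    rw [h1.unique h2]
    exact Finset.sum_congr rfl fun m _ => mul_comm _ _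
  -- injectivity of M
  have Minj : Function.Injective M := by
    intro a b hab
    apply lp.ext
    funext k
    have h1 : (M a) k = (M b) k := by rw [hab]
    rw [hM a k, hM b k] at h1
    have hk : ((k:ℝ) + 1) ≠ 0 := by positivity
    rw [div_eq_div_iff hk hk] at h1
    exact mul_right_cancel₀ hk h1
  -- the conjugated map
  set Vf : L2 → L2 := fun x => Classical.choose (hIm x) with hVfdef
  have hVf : ∀ x, U (M x) = M (Vf x) := fun x => Classical.choose_spec (hIm x)
  have coordV : ∀ (x : L2) (n : ℕ), (Vf x : ∀ _ : ℕ, ℝ) n = ((n:ℝ) + 1) * (U (M x)) n := by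
    intro x n
    have h1 : (M (Vf x)) n = (U (M x)) n := by rw [← hVf]
    rw [hM (Vf x) n] at h1
    have hk : ((n:ℝ) + 1) ≠ 0 := by positivity
    field_simp at h1
    linarith [h1]
  -- coordinatewise bound
  set w : ℕ → ℕ → ℝ := fun n m => (2 * (d:ℝ) + 1) * |u n m| with hw
  have hw0 : ∀ n m, 0 ≤ w n m := fun n m => by positivity
  have habs : ∀ (x : L2) (n : ℕ), |(Vf x : ∀ _ : ℕ, ℝ) n| ≤ ∑ m ∈ S n, w n m * |x m| := by
    intro x n
    rw [coordV x n, key (M x) n, Finset.mul_sum]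
    refine (Finset.abs_sum_le_sum_abs _ _).trans (Finset.sum_le_sum ?_)
    intro m hm
    rw [hM x m]
    have hmn : (n : ℝ) ≤ (m : ℝ) + (d : ℝ) := by
      have := (hmemS.mp hm).1
      exact_mod_cast (by omega : n ≤ m + d)
    have hm1 : (0:ℝ) < (m:ℝ) + 1 := by positivity
    have hfrac : ((n:ℝ) + 1) ≤ (2 * (d:ℝ) + 1) * ((m:ℝ) + 1) := by
      have hd0 : (0:ℝ) ≤ (d:ℝ) := Nat.cast_nonneg d
      have hm0 : (0:ℝ) ≤ (m:ℝ) := Nat.cast_nonneg m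
      nlinarith
    have heq : |((n:ℝ) + 1) * (u n m * (x m / ((m:ℝ) + 1)))|
        = (((n:ℝ) + 1) / ((m:ℝ) + 1)) * (|u n m| * |x m|) := by
      rw [abs_mul, abs_mul, abs_div]
      rw [abs_of_pos (by positivity : (0:ℝ) < (n:ℝ)+1), abs_of_pos hm1]
      ring
    rw [heq, hw]
    have h2 : ((n:ℝ) + 1) / ((m:ℝ) + 1) ≤ 2 * (d:ℝ) + 1 := by
      rw [div_le_iff₀ hm1]; linarith
    calc (((n:ℝ) + 1) / ((m:ℝ) + 1)) * (|u n m| * |x m|)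
        ≤ (2 * (d:ℝ) + 1) * (|u n m| * |x m|) := by
          apply mul_le_mul_of_nonneg_right h2 (by positivity)
      _ = (2 * (d:ℝ) + 1) * |u n m| * |x m| := by ring
  -- row sums
  have hcard : ∀ n, ((S n).card : ℝ) ≤ 2 * (d:ℝ) + 1 := by
    intro n
    have : (S n).card ≤ 2 * d + 1 := by
      rw [hS]; simp only [Nat.card_Icc]; omega
    have h1 : ((S n).card : ℝ) ≤ ((2 * d + 1 : ℕ) : ℝ) := by exact_mod_cast this
    refine h1.trans ?_
    push_cast
    linarith
  have hrow : ∀ n, ∑ m ∈ S n, w n m ≤ (2 * (d:ℝ) + 1) ^ 2 * ‖U‖ := by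
    intro n
    have h1 : ∑ m ∈ S n, |u n m| ≤ (S n).card • ‖U‖ :=
      Finset.sum_le_card_nsmul _ _ _ fun m _ => entry_le U n m
    rw [nsmul_eq_mul] at h1
    have h2 : ((S n).card : ℝ) * ‖U‖ ≤ (2 * (d:ℝ) + 1) * ‖U‖ :=
      mul_le_mul_of_nonneg_right (hcard n) (norm_nonneg _)
    calc ∑ m ∈ S n, w n m = (2 * (d:ℝ) + 1) * ∑ m ∈ S n, |u n m| := by
          rw [Finset.mul_sum]
      _ ≤ (2 * (d:ℝ) + 1) * ((2 * (d:ℝ) + 1) * ‖U‖) := by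
          apply mul_le_mul_of_nonneg_left (h1.trans h2) (by positivity)
      _ = (2 * (d:ℝ) + 1) ^ 2 * ‖U‖ := by ring
  -- Cauchy-Schwarz per row
  have hCS : ∀ (x : L2) (n : ℕ), ((Vf x : ∀ _ : ℕ, ℝ) n) ^ 2
      ≤ (2 * (d:ℝ) + 1) ^ 2 * ‖U‖ * ∑ m ∈ S n, w n m * (x m) ^ 2 := by
    intro x n
    have h1 : ((Vf x : ∀ _ : ℕ, ℝ) n) ^ 2 ≤ (∑ m ∈ S n, w n m * |x m|) ^ 2 := by
      rw [← sq_abs]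
      exact pow_le_pow_left₀ (abs_nonneg _) (habs x n) 2
    have h2 : (∑ m ∈ S n, w n m * |x m|) ^ 2
        ≤ (∑ m ∈ S n, w n m) * ∑ m ∈ S n, w n m * (x m) ^ 2 := by
      apply Finset.sum_sq_le_sum_mul_sum_of_sq_eq_mul
      · exact fun m _ => hw0 n m
      · exact fun m _ => mul_nonneg (hw0 n m) (sq_nonneg _)
      · intro m _
        rw [mul_pow, sq_abs]
        ring
    have h3 : (∑ m ∈ S n, w n m) * ∑ m ∈ S n, w n m * (x m) ^ 2
        ≤ (2 * (d:ℝ) + 1) ^ 2 * ‖U‖ * ∑ m ∈ S n, w n m * (x m) ^ 2 := by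
      apply mul_le_mul_of_nonneg_right (hrow n)
      exact Finset.sum_nonneg fun m _ => mul_nonneg (hw0 n m) (sq_nonneg _)
    linarith
  -- partial sums of x
  have hxsum : ∀ (x : L2) (T : Finset ℕ), ∑ m ∈ T, (x m) ^ 2 ≤ ‖x‖ ^ 2 := by
    intro x T
    have h := lp.sum_rpow_le_norm_rpow (p := 2) (E := fun _ : ℕ => ℝ) (by norm_num) x T
    simp only [ENNReal.toReal_ofNat, Real.norm_eq_abs] at h
    have hconv : ∀ a : ℝ, 0 ≤ a → a ^ (2:ℝ) = a ^ 2 := fun a ha => by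
      rw [show ((2:ℝ)) = ((2:ℕ):ℝ) by norm_num, Real.rpow_natCast]
    calc ∑ m ∈ T, (x m) ^ 2 = ∑ m ∈ T, |x m| ^ (2:ℝ) := by
          refine Finset.sum_congr rfl fun m _ => ?_
          rw [hconv _ (abs_nonneg _), sq_abs]
      _ ≤ ‖x‖ ^ (2:ℝ) := h
      _ = ‖x‖ ^ 2 := hconv _ (norm_nonneg _)
  -- main partial sum bound
  have hmain : ∀ (x : L2) (s : Finset ℕ), ∑ n ∈ s, ((Vf x : ∀ _ : ℕ, ℝ) n) ^ 2
      ≤ (2 * (d:ℝ) + 1) ^ 3 * ‖U‖ ^ 2 * ‖x‖ ^ 2 := by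
    intro x s
    set T : Finset ℕ := s.biUnion S with hT
    have step1 : ∀ n ∈ s, ∑ m ∈ S n, w n m * (x m) ^ 2
        = ∑ m ∈ T, (if m ∈ S n then w n m * (x m) ^ 2 else 0) := by
      intro n hn
      rw [Finset.sum_ite_mem, Finset.inter_eq_right.mpr (Finset.subset_biUnion_of_mem S hn)]
    have step2 : ∑ n ∈ s, ∑ m ∈ T, (if m ∈ S n then w n m * (x m) ^ 2 else 0)
        = ∑ m ∈ T, ∑ n ∈ s, (if m ∈ S n then w n m * (x m) ^ 2 else 0) :=
      Finset.sum_comm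
    have step3 : ∀ m, ∑ n ∈ s, (if m ∈ S n then w n m * (x m) ^ 2 else 0)
        ≤ (2 * (d:ℝ) + 1) * ‖U‖ * (x m) ^ 2 := by
      intro m
      have h1 : ∑ n ∈ s, (if m ∈ S n then w n m * (x m) ^ 2 else 0)
          ≤ ∑ n ∈ s, w n m * (x m) ^ 2 := by
        refine Finset.sum_le_sum fun n _ => ?_
        split
        · exact le_rfl
        · exact mul_nonneg (hw0 n m) (sq_nonneg _)
      have h2 : ∑ n ∈ s, w n m * (x m) ^ 2
          = (2 * (d:ℝ) + 1) * (x m) ^ 2 * ∑ n ∈ s, |u n m| := by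
        rw [Finset.mul_sum]
        exact Finset.sum_congr rfl fun n _ => by rw [hw]; ring
      have h3 : (2 * (d:ℝ) + 1) * (x m) ^ 2 * ∑ n ∈ s, |u n m|
          ≤ (2 * (d:ℝ) + 1) * (x m) ^ 2 * ‖U‖ := by
        apply mul_le_mul_of_nonneg_left (colsum U m s) (by positivity)
      calc ∑ n ∈ s, (if m ∈ S n then w n m * (x m) ^ 2 else 0)
          ≤ ∑ n ∈ s, w n m * (x m) ^ 2 := h1
        _ = (2 * (d:ℝ) + 1) * (x m) ^ 2 * ∑ n ∈ s, |u n m| := h2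
        _ ≤ (2 * (d:ℝ) + 1) * (x m) ^ 2 * ‖U‖ := h3
        _ = (2 * (d:ℝ) + 1) * ‖U‖ * (x m) ^ 2 := by ring
    calc ∑ n ∈ s, ((Vf x : ∀ _ : ℕ, ℝ) n) ^ 2
        ≤ ∑ n ∈ s, (2 * (d:ℝ) + 1) ^ 2 * ‖U‖ * ∑ m ∈ S n, w n m * (x m) ^ 2 :=
          Finset.sum_le_sum fun n _ => hCS x n
      _ = (2 * (d:ℝ) + 1) ^ 2 * ‖U‖ * ∑ n ∈ s, ∑ m ∈ S n, w n m * (x m) ^ 2 := by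
          rw [Finset.mul_sum]
      _ = (2 * (d:ℝ) + 1) ^ 2 * ‖U‖
          * ∑ m ∈ T, ∑ n ∈ s, (if m ∈ S n then w n m * (x m) ^ 2 else 0) := by
          rw [Finset.sum_congr rfl step1, step2]
      _ ≤ (2 * (d:ℝ) + 1) ^ 2 * ‖U‖ * ∑ m ∈ T, (2 * (d:ℝ) + 1) * ‖U‖ * (x m) ^ 2 := by
          apply mul_le_mul_of_nonneg_left (Finset.sum_le_sum fun m _ => step3 m) (by positivity)
      _ = (2 * (d:ℝ) + 1) ^ 3 * ‖U‖ ^ 2 * ∑ m ∈ T, (x m) ^ 2 := by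
          rw [← Finset.mul_sum]; ring
      _ ≤ (2 * (d:ℝ) + 1) ^ 3 * ‖U‖ ^ 2 * ‖x‖ ^ 2 := by
          apply mul_le_mul_of_nonneg_left (hxsum x T) (by positivity)
  -- norm bound for Vf
  set C : ℝ := Real.sqrt ((2 * (d:ℝ) + 1) ^ 3) * ‖U‖ with hC
  have hC0 : 0 ≤ C := mul_nonneg (Real.sqrt_nonneg _) (norm_nonneg _)
  have hnorm : ∀ x : L2, ‖Vf x‖ ≤ C * ‖x‖ := by
    intro x
    apply lp.norm_le_of_forall_sum_le (by norm_num : (0:ℝ) < (2:ℝ≥0∞).toReal)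
      (mul_nonneg hC0 (norm_nonneg _))
    intro s
    have hconv : ∀ a : ℝ, 0 ≤ a → a ^ ((2:ℝ≥0∞).toReal) = a ^ 2 := fun a ha => by
      rw [ENNReal.toReal_ofNat, show ((2:ℝ)) = ((2:ℕ):ℝ) by norm_num, Real.rpow_natCast]
    have h1 : ∑ n ∈ s, ‖(Vf x : ∀ _ : ℕ, ℝ) n‖ ^ ((2:ℝ≥0∞).toReal)
        = ∑ n ∈ s, ((Vf x : ∀ _ : ℕ, ℝ) n) ^ 2 := by
      refine Finset.sum_congr rfl fun n _ => ?_
      rw [Real.norm_eq_abs, hconv _ (abs_nonneg _), sq_abs]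
    have h2 : (C * ‖x‖) ^ ((2:ℝ≥0∞).toReal) = (2 * (d:ℝ) + 1) ^ 3 * ‖U‖ ^ 2 * ‖x‖ ^ 2 := by
      rw [hconv _ (mul_nonneg hC0 (norm_nonneg _)), hC, mul_pow, mul_pow,
        Real.sq_sqrt (by positivity)]
      try ring
    rw [h1, h2]
    exact hmain x s
  -- build the continuous linear map
  have hadd : ∀ x y : L2, Vf (x + y) = Vf x + Vf y := by
    intro x y
    apply Minj
    simp only [map_add, ← hVf]
  have hsmul : ∀ (c : ℝ) (x : L2), Vf (c • x) = c • Vf x := by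
    intro c x
    apply Minj
    simp only [map_smul, ← hVf]
  set Vlin : L2 →ₗ[ℝ] L2 :=
    { toFun := Vf
      map_add' := hadd
      map_smul' := hsmul } with hVlin
  refine ⟨Vlin.mkContinuous C hnorm, fun x => ?_, ?_⟩
  · exact (hVf x).symm
  · exact Vlin.mkContinuous_norm_le hC0 hnorm
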